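/- Let (\lambda_n)_{n \in \mathbb{Z}} be a strictly increasing sequence of reals with \lambda_{n+2} - \lambda_n \ge \pi for all n, and let (a_n) be a finitely supported sequence of complex numbers. Then \sum_{m,n} g_2(\lambda_m - \lambda_n) a_m \overline{a_n} \ge 0, where g_2(\lambda) = \int_{-\infty}^{\infty} H^2(x+\lambda) H^0(x) dx. -/

import Mathlib

open MeasureTheory Real

noncomputable def H (x : ℝ) : ℝ := if |x| ≤ Real.pi / 2 then Real.cos x else 0

noncomputable def Hpow (M : ℕ) (x : ℝ) : ℝ :=
  if M = 0 then (if |x| ≤ Real.pi / 2 then 1 else 0) else (H x) ^ M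

noncomputable def HpowDeriv (M : ℕ) (x : ℝ) : ℝ :=
  if |x| ≤ Real.pi / 2 then -(M : ℝ) * Real.cos x ^ (M - 1) * Real.sin x else 0

noncomputable def Hderiv (x : ℝ) : ℝ := if |x| < Real.pi / 2 then -Real.sin x else 0

noncomputable def gM (M : ℕ) (l : ℝ) : ℝ := ∫ x : ℝ, Hpow M (x + l) * Hpow (M - 2) x

/-!
For `0 ≤ λ ≤ π` one computes `g₂(λ) = ((π - λ) + sin λ cos λ) / 2`, and `g₂` is even and vanishes
for `|λ| ≥ π`. Under the gap condition the matrix `g₂(λ_m - λ_n)` is therefore symmetric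
tridiagonal, with diagonal `g₂(0) = π/2` and nonnegative off-diagonal entries
`e_m = g₂(λ_{m+1} - λ_m)`. For `d + d' ≥ π` the identity
`sin d cos d + sin d' cos d' = -sin (d + d' - π) cos (d - d')` and `sin s ≤ s` give
`g₂(d) + g₂(d') ≤ π/2`, so `e_{m-1} + e_m ≤ π/2`, and summation by parts writes the form as
`∑ e_m |a_m + a_{m+1}|² + ∑ (π/2 - e_{m-1} - e_m) |a_m|² ≥ 0`.
-/

lemma H_nonneg (x : ℝ) : 0 ≤ H x := by
  unfold H
  split_ifs with hx
  · exact cos_nonneg_of_mem_Icc (abs_le.1 hx)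
  · rfl

lemma Hpow_nonneg (M : ℕ) (x : ℝ) : 0 ≤ Hpow M x := by
  unfold Hpow
  split_ifs
  · norm_num
  · norm_num
  · exact pow_nonneg (H_nonneg x) M

lemma Hpow_neg (M : ℕ) (x : ℝ) : Hpow M (-x) = Hpow M x := by
  simp only [Hpow, H, abs_neg, cos_neg]

lemma gM_nonneg (M : ℕ) (l : ℝ) : 0 ≤ gM M l :=
  integral_nonneg fun x => mul_nonneg (Hpow_nonneg M _) (Hpow_nonneg _ x)

lemma gM_neg (M : ℕ) (l : ℝ) : gM M (-l) = gM M l := by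
  rw [gM, gM, ← integral_neg_eq_self]
  simp only [← neg_add, Hpow_neg]

lemma Hpow_two_mul_Hpow_zero {l : ℝ} (hl : 0 ≤ l) (x : ℝ) :
    Hpow 2 (x + l) * Hpow 0 x =
      (Set.Icc (-(π / 2)) (π / 2 - l)).indicator (fun x => cos (x + l) ^ 2) x := by
  simp only [Hpow, H, if_neg two_ne_zero, Set.indicator, Set.mem_Icc, abs_le]
  split_ifs <;> grind

lemma gM_two_eq_setIntegral {l : ℝ} (hl : 0 ≤ l) :
    gM 2 l = ∫ x in Set.Icc (-(π / 2)) (π / 2 - l), cos (x + l) ^ 2 := by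
  rw [gM, ← integral_indicator measurableSet_Icc]
  exact integral_congr_ae (Filter.Eventually.of_forall (Hpow_two_mul_Hpow_zero hl))

lemma gM_two_eq_of_le_pi {l : ℝ} (h0 : 0 ≤ l) (hπ : l ≤ π) :
    gM 2 l = (π - l) / 2 + sin l * cos l / 2 := by
  rw [gM_two_eq_setIntegral h0, integral_Icc_eq_integral_Ioc,
    ← intervalIntegral.integral_of_le (by linarith),
    intervalIntegral.integral_comp_add_right (fun u => cos u ^ 2), integral_cos_sq]
  have hs : sin (-(π / 2) + l) = -cos l := by rw [neg_add_eq_sub, sin_sub_pi_div_two]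
  have hc : cos (-(π / 2) + l) = sin l := by rw [neg_add_eq_sub, cos_sub_pi_div_two]
  rw [sub_add_cancel, hs, hc, cos_pi_div_two]
  ring

lemma gM_two_eq_zero_of_pi_le {l : ℝ} (h : π ≤ l) : gM 2 l = 0 := by
  rw [gM_two_eq_setIntegral (pi_pos.le.trans h), integral_Icc_eq_integral_Ioc,
    Set.Ioc_eq_empty (by linarith), Measure.restrict_empty, integral_zero_measure]

lemma gM_two_eq_zero_of_pi_le_abs {l : ℝ} (h : π ≤ |l|) : gM 2 l = 0 := by
  rcases le_abs'.1 h with h | h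
  · rw [← gM_neg, gM_two_eq_zero_of_pi_le (by linarith)]
  · exact gM_two_eq_zero_of_pi_le h

lemma gM_two_zero : gM 2 0 = π / 2 := by
  simp [gM_two_eq_of_le_pi le_rfl pi_pos.le]

lemma gM_two_le (l : ℝ) : gM 2 l ≤ π / 2 := by
  wlog hl : 0 ≤ l generalizing l
  · simpa [gM_neg] using this (-l) (by linarith)
  rcases le_total π l with hπ | hπ
  · rw [gM_two_eq_zero_of_pi_le hπ]; positivity
  · have : sin (2 * l) ≤ 2 * l := sin_le (by linarith)
    rw [sin_two_mul] at this
    rw [gM_two_eq_of_le_pi hl hπ]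
    linarith

lemma gM_two_add_le {d d' : ℝ} (hd : 0 ≤ d) (hd' : 0 ≤ d') (h : π ≤ d + d') :
    gM 2 d + gM 2 d' ≤ π / 2 := by
  rcases le_total π d with hπ | hπ
  · simpa [gM_two_eq_zero_of_pi_le hπ] using gM_two_le d'
  rcases le_total π d' with hπ' | hπ'
  · simpa [gM_two_eq_zero_of_pi_le hπ'] using gM_two_le d
  rw [gM_two_eq_of_le_pi hd hπ, gM_two_eq_of_le_pi hd' hπ']
  have hsum : sin d * cos d + sin d' * cos d' = -sin (d + d' - π) * cos (d - d') := by
    rw [sin_sub_pi, sin_add, cos_sub]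
    linear_combination (-(sin d * cos d)) * sin_sq_add_cos_sq d'
      - sin d' * cos d' * sin_sq_add_cos_sq d
  have hs0 : 0 ≤ sin (d + d' - π) := sin_nonneg_of_nonneg_of_le_pi (by linarith) (by linarith)
  have hs : sin (d + d' - π) ≤ d + d' - π := sin_le (by linarith)
  nlinarith [neg_one_le_cos (d - d')]

section Tridiagonal

open Function Complex ComplexConjugate

lemma finsum_comp_sub_one_sub_eq_zero {G : Type*} [AddCommGroup G] {φ : ℤ → G}
    (hφ : φ.HasFiniteSupport) : ∑ᶠ m, (φ (m - 1) - φ m) = 0 := by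
  have hφ' : HasFiniteSupport fun m : ℤ => φ (m - 1) :=
    hφ.fun_comp_of_injective (sub_left_injective (b := 1))
  rw [finsum_sub_distrib hφ' hφ, sub_eq_zero]
  exact finsum_comp_equiv (Equiv.subRight 1)

variable {k : ℤ → ℤ → ℝ}

lemma finsum_mul_eq_of_band (hband : ∀ m n, 2 ≤ |m - n| → k m n = 0) (f : ℤ → ℝ) (m : ℤ) :
    ∑ᶠ n, k m n * f n = k m (m - 1) * f (m - 1) + k m m * f m + k m (m + 1) * f (m + 1) := by
  classical
  rw [finsum_eq_sum_of_support_subset (s := {m - 1, m, m + 1})]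
  · rw [Finset.sum_insert (by simp only [Finset.mem_insert, Finset.mem_singleton]; omega),
      Finset.sum_pair (by omega), add_assoc]
  · intro n hn
    by_contra h
    simp only [Finset.coe_insert, Finset.coe_singleton, Set.mem_insert_iff,
      Set.mem_singleton_iff] at h
    exact hn (by simp only [hband m n (le_abs.2 (by omega)), zero_mul])

lemma tridiagonal_quadForm_nonneg (hsymm : ∀ m n, k m n = k n m)
    (hband : ∀ m n, 2 ≤ |m - n| → k m n = 0) (hoff : ∀ m, 0 ≤ k (m + 1) m)
    (hdom : ∀ m, k m (m - 1) + k (m + 1) m ≤ k m m) (a : ℤ → ℂ) (ha : a.support.Finite) :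
    0 ≤ ∑ᶠ m, ∑ᶠ n, k m n * (a m * conj (a n)).re := by
  have hfin (f : ℤ → ℝ) (hf : ∀ m, a m = 0 → a (m + 1) = 0 → f m = 0) : f.HasFiniteSupport :=
    (ha.union (ha.preimage (add_left_injective 1).injOn)).subset fun m hm => by
      by_contra h
      simp only [Set.mem_union, Set.mem_preimage, mem_support, not_or, not_not] at h
      exact hm (hf m h.1 h.2)
  -- Summation by parts against `φ` rewrites the form as a sum of the nonnegative terms `P m`.
  set φ : ℤ → ℝ := fun m => k (m + 1) m * ((a (m + 1) * conj (a m)).re + normSq (a (m + 1)))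
  set P : ℤ → ℝ := fun m => k (m + 1) m * normSq (a m + a (m + 1)) +
    (k m m - k m (m - 1) - k (m + 1) m) * normSq (a m)
  have hrow (m : ℤ) : ∑ᶠ n, k m n * (a m * conj (a n)).re = P m + (φ (m - 1) - φ m) := by
    rw [finsum_mul_eq_of_band hband, hsymm m (m + 1)]
    have hre : (a (m + 1) * conj (a m)).re = (a m * conj (a (m + 1))).re := by
      rw [← conj_re, map_mul, conj_conj, mul_comm]
    simp only [P, φ, sub_add_cancel, normSq_add, mul_conj, ofReal_re, hre]
    ring
  have hφ : φ.HasFiniteSupport := hfin φ fun m h0 h1 => by simp [φ, h0, h1]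
  have hP : P.HasFiniteSupport := hfin P fun m h0 h1 => by simp [P, h0, h1]
  have hdiff : HasFiniteSupport fun m => φ (m - 1) - φ m :=
    hfin _ fun m h0 h1 => by simp [φ, h0, h1]
  rw [finsum_congr hrow, finsum_add_distrib hP hdiff, finsum_comp_sub_one_sub_eq_zero hφ,
    add_zero]
  exact finsum_nonneg fun m => add_nonneg (mul_nonneg (hoff m) (normSq_nonneg _))
    (mul_nonneg (by linarith [hdom m]) (normSq_nonneg _))

end Tridiagonal

lemma le_abs_sub_of_two_le_abs_sub {f : ℤ → ℝ} {δ : ℝ} (hf : Monotone f)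
    (hgap : ∀ n, δ ≤ f (n + 2) - f n) {m n : ℤ} (h : 2 ≤ |m - n|) : δ ≤ |f m - f n| := by
  wlog hnm : n + 2 ≤ m generalizing m n
  · rw [abs_sub_comm] at h ⊢
    exact this h (by rcases le_abs.1 h with h | h <;> omega)
  exact (by linarith [hgap n, hf hnm] : δ ≤ f m - f n).trans (le_abs_self _)

theorem stmt16 (lam : ℤ → ℝ) (hmono : StrictMono lam)
    (hgap : ∀ n : ℤ, Real.pi ≤ lam (n + 2) - lam n)
    (a : ℤ → ℂ) (ha : (Function.support a).Finite) :
    0 ≤ ∑ᶠ m : ℤ, ∑ᶠ n : ℤ, gM 2 (lam m - lam n) * (a m * starRingEnd ℂ (a n)).re := by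
  refine tridiagonal_quadForm_nonneg (k := fun m n => gM 2 (lam m - lam n))
    (fun m n => by rw [← gM_neg, neg_sub])
    (fun m n h => gM_two_eq_zero_of_pi_le_abs (le_abs_sub_of_two_le_abs_sub hmono.monotone hgap h))
    (fun m => gM_nonneg 2 _) (fun m => ?_) a ha
  have hgap' := hgap (m - 1)
  rw [show m - 1 + 2 = m + 1 by ring] at hgap'
  rw [sub_self, gM_two_zero]
  exact gM_two_add_le (sub_nonneg.2 (hmono.monotone (by omega)))
    (sub_nonneg.2 (hmono.monotone (by omega))) (by linarith)
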